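/- arXiv:2405.09784 — 3 statements merged into one kernel-verified Lean document; each statement's English description precedes it below -/
import Mathlib

section
/- Let c* and ĉ be two type-count vectors over a finite type set, each summing to n, and suppose the advice graph determined by ĉ has a matching of size n̂. Then any assignment scheme that matches arriving vertices to unused proposed matches of the same type (leaving a vertex unmatched if its type's advice count is exhausted) produces a matching of size at least n̂ − L1(c*, ĉ)/2. -/
/-- Mimicking an advice matching: if `cstar` and `chat` are type-count vectors each
summing to `n`, `matched t ≤ chat t` records how many type-`t` vertices are matched
in the advice matching `M̂` (of total size `n̂`), then the mimic strategy, which makes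
at least `min (cstar t) (matched t)` matches of each type `t`, produces a matching of
size at least `n̂ - L1(cstar, chat)/2`. -/
theorem mimic_matching_size {T : Type*} [Fintype T]
    (n nhat : ℕ) (cstar chat matched : T → ℕ)
    (hcstar : ∑ t, cstar t = n) (hchat : ∑ t, chat t = n)
    (hmatched : ∀ t, matched t ≤ chat t) (hnhat : ∑ t, matched t = nhat) :
    ((nhat : ℝ) - (∑ t, |(cstar t : ℝ) - (chat t : ℝ)|) / 2)
      ≤ (∑ t, min (cstar t) (matched t) : ℕ) := by
  have hsum0 : ∑ t, ((chat t : ℝ) - cstar t) = 0 := by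
    rw [Finset.sum_sub_distrib]
    have h1 : ∑ t, (chat t : ℝ) = n := by exact_mod_cast congrArg Nat.cast hchat
    have h2 : ∑ t, (cstar t : ℝ) = n := by exact_mod_cast congrArg Nat.cast hcstar
    rw [h1, h2]; ring
  have hmaxsum : ∑ t, max ((chat t : ℝ) - cstar t) 0
      = (∑ t, |(cstar t : ℝ) - chat t|) / 2 := by
    have : ∀ t, max ((chat t : ℝ) - cstar t) 0
        = (|(cstar t : ℝ) - chat t| + ((chat t : ℝ) - cstar t)) / 2 := by
      intro t
      rcases le_total ((cstar t : ℝ)) (chat t) with h | h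
      · rw [abs_of_nonpos (by linarith), max_eq_left (by linarith)]; ring
      · rw [abs_of_nonneg (by linarith), max_eq_right (by linarith)]; ring
    rw [Finset.sum_congr rfl (fun t _ => this t), ← Finset.sum_div,
      Finset.sum_add_distrib, hsum0, add_zero]
  have hnhatR : (nhat : ℝ) = ∑ t, (matched t : ℝ) := by
    exact_mod_cast (congrArg Nat.cast hnhat).symm
  have hminR : ((∑ t, min (cstar t) (matched t) : ℕ) : ℝ)
      = ∑ t, min ((cstar t : ℝ)) (matched t) := by
    push_cast; rfl
  have key : ∀ t, (matched t : ℝ) - min ((cstar t : ℝ)) (matched t)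
      ≤ max ((chat t : ℝ) - cstar t) 0 := by
    intro t
    have hm : (matched t : ℝ) ≤ chat t := by exact_mod_cast hmatched t
    rcases le_total ((cstar t : ℝ)) (matched t) with h | h
    · rw [min_eq_left h]
      calc (matched t : ℝ) - cstar t ≤ (chat t : ℝ) - cstar t := by linarith
        _ ≤ max ((chat t : ℝ) - cstar t) 0 := le_max_left _ _
    · rw [min_eq_right h]
      exact le_trans (by linarith) (le_max_right ((chat t : ℝ) - cstar t) 0)
  have hsumkey : ∑ t, ((matched t : ℝ) - min ((cstar t : ℝ)) (matched t))
      ≤ ∑ t, max ((chat t : ℝ) - cstar t) 0 :=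
    Finset.sum_le_sum fun t _ => key t
  rw [Finset.sum_sub_distrib] at hsumkey
  rw [hminR, hnhatR]
  linarith [hmaxsum]
end

section
/- For even n, there exist two bipartite graphs G1 and G2 on offline vertices {u_1,…,u_n} and online vertices {v_1,…,v_n}, both admitting perfect matchings and agreeing on the neighborhoods of the first n/2 online vertices (each v_j for j ≤ n/2 is adjacent to exactly u_j and u_{j+n/2}), such that: in G1 vertex v_j for j > n/2 is adjacent only to u_{j−n/2}, while in G2 vertex v_j for j > n/2 is adjacent only to u_j. Any matching of the first n/2 online vertices that permits a perfect completion in G1 permits at most n/2 total matches if the true graph is G2, and vice versa. Hence no deterministic online algorithm (with any advice) can guarantee a perfect matching on the correct graph while guaranteeing strictly more than n/2 matches on the other. -/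
/-! Write `n = r + r`, so the online vertex `v_{i + r}` has a single neighbour: `u_i` in `G1`,
`u_{i + r}` in `G2`. A perfect matching of one graph must give `v_{i + r}` that neighbour, so the
prefix vertex `v_i` takes the other one, which is exactly the only neighbour of `v_{i + r}` in the
other graph. Keeping the same prefix decisions there leaves the whole second half unmatched. -/

/-- A partial assignment `μ` of online vertices (indexed by `Fin n`) to offline vertices
is a matching respecting the neighborhoods `N` if every assigned offline vertex is a
neighbor, and no offline vertex is used twice. -/
def RespectsMatching (n : ℕ) (N : Fin n → Set (Fin n)) (μ : Fin n → Option (Fin n)) : Prop :=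
  (∀ j u, μ j = some u → u ∈ N j) ∧
  (∀ j j' u, μ j = some u → μ j' = some u → j = j')

/-- Number of matched online vertices. -/
def matchSize (n : ℕ) (μ : Fin n → Option (Fin n)) : ℕ :=
  (Finset.univ.filter fun j => (μ j).isSome).card

/-- Neighborhoods in the gadget graph `G1`: `v_j` for `j < n/2` is adjacent to `u_j` and
`u_{j + n/2}`; `v_j` for `j ≥ n/2` is adjacent only to `u_{j - n/2}`. -/
def gadgetN1 (n : ℕ) : Fin n → Set (Fin n) := fun j =>
  if (j : ℕ) < n / 2 then {u | (u : ℕ) = (j : ℕ) ∨ (u : ℕ) = (j : ℕ) + n / 2}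
  else {u | (u : ℕ) = (j : ℕ) - n / 2}

/-- Neighborhoods in the gadget graph `G2`: same first half as `G1`, but `v_j` for
`j ≥ n/2` is adjacent only to `u_j`. -/
def gadgetN2 (n : ℕ) : Fin n → Set (Fin n) := fun j =>
  if (j : ℕ) < n / 2 then {u | (u : ℕ) = (j : ℕ) ∨ (u : ℕ) = (j : ℕ) + n / 2}
  else {u | u = j}

open Function

section Matching

variable {n : ℕ} {N : Fin n → Set (Fin n)} {μ : Fin n → Option (Fin n)}

theorem respectsMatching_some_comp {σ : Fin n → Fin n} (hσ : Injective σ)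
    (hN : ∀ j, σ j ∈ N j) : RespectsMatching n N (some ∘ σ) :=
  ⟨fun j _ hu => Option.some_injective _ hu ▸ hN j,
    fun _ _ _ hj hj' => hσ (Option.some_injective _ (hj.trans hj'.symm))⟩

namespace RespectsMatching

theorem eq_some_of_subset_singleton (h : RespectsMatching n N μ) {j u : Fin n}
    (hj : N j ⊆ {u}) (hs : (μ j).isSome) : μ j = some u := by
  obtain ⟨x, hx⟩ := Option.isSome_iff_exists.mp hs
  rw [hx, hj (h.1 j x hx)]

theorem eq_none_of_eq_some (h : RespectsMatching n N μ) {i j u : Fin n} (hij : i ≠ j)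
    (hj : N j ⊆ {u}) (hi : μ i = some u) : μ j = none := by
  refine Option.eq_none_iff_forall_ne_some.mpr fun x hx => hij ?_
  rw [hj (h.1 j x hx)] at hx
  exact h.2 i j u hi hx

theorem eq_some_of_isSome_of_isSome (h : RespectsMatching n N μ) {i j u w : Fin n}
    (hij : i ≠ j) (hi : N i ⊆ {u, w}) (hj : N j ⊆ {u}) (hsi : (μ i).isSome)
    (hsj : (μ j).isSome) : μ i = some w := by
  obtain ⟨x, hx⟩ := Option.isSome_iff_exists.mp hsi
  rcases hi (h.1 i x hx) with rfl | rfl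
  · exact absurd (h.2 i j x hx (h.eq_some_of_subset_singleton hj hsj)) hij
  · exact hx

end RespectsMatching

theorem matchSize_le_of_natAdd_eq_none {m k : ℕ} {μ : Fin (m + k) → Option (Fin (m + k))}
    (h : ∀ i : Fin k, μ (Fin.natAdd m i) = none) : matchSize (m + k) μ ≤ m := by
  calc matchSize (m + k) μ ≤ (Finset.univ.image (Fin.castAdd k)).card := by
        refine Finset.card_le_card fun j hj => ?_
        induction j using Fin.addCases with
        | left i => exact Finset.mem_image_of_mem _ (Finset.mem_univ i)
        | right i => simp [h i] at hj
    _ ≤ m := Finset.card_image_le.trans (Finset.card_fin m).le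

end Matching

section Gadget

theorem Nat.add_self_div_two (r : ℕ) : (r + r) / 2 = r := by omega

variable {r : ℕ} (i : Fin r)

theorem castAdd_ne_natAdd : Fin.castAdd r i ≠ Fin.natAdd r i := by
  rw [Ne, Fin.ext_iff, Fin.val_castAdd, Fin.val_natAdd]
  omega

theorem gadgetN1_castAdd :
    gadgetN1 (r + r) (Fin.castAdd r i) = {Fin.castAdd r i, Fin.natAdd r i} := by
  ext u
  simp [gadgetN1, Fin.ext_iff, Nat.add_self_div_two]

theorem gadgetN2_castAdd :
    gadgetN2 (r + r) (Fin.castAdd r i) = {Fin.castAdd r i, Fin.natAdd r i} := by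
  ext u
  simp [gadgetN2, Fin.ext_iff, Nat.add_self_div_two]

theorem gadgetN1_natAdd : gadgetN1 (r + r) (Fin.natAdd r i) = {Fin.castAdd r i} := by
  ext u
  simp [gadgetN1, Fin.ext_iff, Nat.add_self_div_two]

theorem gadgetN2_natAdd : gadgetN2 (r + r) (Fin.natAdd r i) = {Fin.natAdd r i} := by
  ext u
  simp [gadgetN2, Fin.ext_iff, Nat.add_self_div_two]

theorem exists_perfect_gadgetN1 (r : ℕ) :
    ∃ μ, RespectsMatching (r + r) (gadgetN1 (r + r)) μ ∧ ∀ j, (μ j).isSome := by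
  let σ : Fin (r + r) ≃ Fin (r + r) :=
    finSumFinEquiv.symm.trans ((Equiv.sumComm _ _).trans finSumFinEquiv)
  refine ⟨some ∘ σ, respectsMatching_some_comp σ.injective fun j => ?_, fun _ => rfl⟩
  induction j using Fin.addCases with
  | left i =>
    rw [gadgetN1_castAdd]
    exact Or.inr (by simp only [σ, Equiv.trans_apply, finSumFinEquiv_symm_apply_castAdd,
      Equiv.sumComm_apply, Sum.swap_inl, finSumFinEquiv_apply_right, Set.mem_singleton_iff])
  | right i =>
    rw [gadgetN1_natAdd]
    simp only [σ, Equiv.trans_apply, finSumFinEquiv_symm_apply_natAdd, Equiv.sumComm_apply,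
      Sum.swap_inr, finSumFinEquiv_apply_left, Set.mem_singleton_iff]

theorem exists_perfect_gadgetN2 (r : ℕ) :
    ∃ μ, RespectsMatching (r + r) (gadgetN2 (r + r)) μ ∧ ∀ j, (μ j).isSome := by
  refine ⟨some, respectsMatching_some_comp injective_id fun j => ?_, fun _ => rfl⟩
  induction j using Fin.addCases with
  | left i => exact (gadgetN2_castAdd i).symm ▸ Or.inl rfl
  | right i => exact (gadgetN2_natAdd i).symm ▸ rfl

theorem matchSize_le_of_perfect_gadgetN1 {μ₁ μ₂ : Fin (r + r) → Option (Fin (r + r))}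
    (h₁ : RespectsMatching (r + r) (gadgetN1 (r + r)) μ₁) (hs₁ : ∀ j, (μ₁ j).isSome)
    (h₂ : RespectsMatching (r + r) (gadgetN2 (r + r)) μ₂)
    (hagree : ∀ i : Fin r, μ₂ (Fin.castAdd r i) = μ₁ (Fin.castAdd r i)) :
    matchSize (r + r) μ₂ ≤ r := by
  refine matchSize_le_of_natAdd_eq_none fun i => ?_
  have h₁i : μ₁ (Fin.castAdd r i) = some (Fin.natAdd r i) :=
    h₁.eq_some_of_isSome_of_isSome (castAdd_ne_natAdd i) (gadgetN1_castAdd i).subset (gadgetN1_natAdd i).subset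
      (hs₁ _) (hs₁ _)
  exact h₂.eq_none_of_eq_some (castAdd_ne_natAdd i) (gadgetN2_natAdd i).subset (h₁i ▸ hagree i)

theorem matchSize_le_of_perfect_gadgetN2 {μ₁ μ₂ : Fin (r + r) → Option (Fin (r + r))}
    (h₂ : RespectsMatching (r + r) (gadgetN2 (r + r)) μ₂) (hs₂ : ∀ j, (μ₂ j).isSome)
    (h₁ : RespectsMatching (r + r) (gadgetN1 (r + r)) μ₁)
    (hagree : ∀ i : Fin r, μ₁ (Fin.castAdd r i) = μ₂ (Fin.castAdd r i)) :
    matchSize (r + r) μ₁ ≤ r := by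
  refine matchSize_le_of_natAdd_eq_none fun i => ?_
  have h₂i : μ₂ (Fin.castAdd r i) = some (Fin.castAdd r i) :=
    h₂.eq_some_of_isSome_of_isSome (castAdd_ne_natAdd i) ((gadgetN2_castAdd i).trans (Set.pair_comm _ _)).subset
      (gadgetN2_natAdd i).subset (hs₂ _) (hs₂ _)
  exact h₁.eq_none_of_eq_some (castAdd_ne_natAdd i) (gadgetN1_natAdd i).subset (h₂i ▸ hagree i)

end Gadget

theorem hardness_gadget_general (n : ℕ) (hn : Even n) :
    (∃ μ, RespectsMatching n (gadgetN1 n) μ ∧ ∀ j, (μ j).isSome) ∧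
    (∃ μ, RespectsMatching n (gadgetN2 n) μ ∧ ∀ j, (μ j).isSome) ∧
    (∀ μ₁ μ₂, RespectsMatching n (gadgetN1 n) μ₁ → (∀ j, (μ₁ j).isSome) →
      RespectsMatching n (gadgetN2 n) μ₂ →
      (∀ j : Fin n, (j : ℕ) < n / 2 → μ₂ j = μ₁ j) →
      matchSize n μ₂ ≤ n / 2) ∧
    (∀ μ₂ μ₁, RespectsMatching n (gadgetN2 n) μ₂ → (∀ j, (μ₂ j).isSome) →
      RespectsMatching n (gadgetN1 n) μ₁ →
      (∀ j : Fin n, (j : ℕ) < n / 2 → μ₁ j = μ₂ j) →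
      matchSize n μ₁ ≤ n / 2) := by
  obtain ⟨r, rfl⟩ := hn
  rw [Nat.add_self_div_two]
  exact ⟨exists_perfect_gadgetN1 r, exists_perfect_gadgetN2 r,
    fun _ _ h₁ hs₁ h₂ hagree =>
      matchSize_le_of_perfect_gadgetN1 h₁ hs₁ h₂ fun i => hagree _ i.isLt,
    fun _ _ h₂ hs₂ h₁ hagree =>
      matchSize_le_of_perfect_gadgetN2 h₂ hs₂ h₁ fun i => hagree _ i.isLt⟩

/-- Hardness gadget: both `G1` and `G2` admit perfect matchings and agree on the first
`n/2` online vertices, yet any prefix decisions compatible with a perfect matching in one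
graph yield at most `n/2` total matches in the other. Hence no (deterministic) online
algorithm, with any advice, can be 1-consistent and guarantee strictly more than `n/2`
matches on the wrong graph. -/
theorem hardness_gadget (n : ℕ) (hn : Even n) (hpos : 0 < n) :
    (∃ μ, RespectsMatching n (gadgetN1 n) μ ∧ ∀ j, (μ j).isSome) ∧
    (∃ μ, RespectsMatching n (gadgetN2 n) μ ∧ ∀ j, (μ j).isSome) ∧
    (∀ μ₁ μ₂, RespectsMatching n (gadgetN1 n) μ₁ → (∀ j, (μ₁ j).isSome) →
      RespectsMatching n (gadgetN2 n) μ₂ →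
      (∀ j : Fin n, (j : ℕ) < n / 2 → μ₂ j = μ₁ j) →
      matchSize n μ₂ ≤ n / 2) ∧
    (∀ μ₂ μ₁, RespectsMatching n (gadgetN2 n) μ₂ → (∀ j, (μ₂ j).isSome) →
      RespectsMatching n (gadgetN1 n) μ₁ →
      (∀ j : Fin n, (j : ℕ) < n / 2 → μ₁ j = μ₂ j) →
      matchSize n μ₁ ≤ n / 2) :=
  hardness_gadget_general n hn
end

section
/- For even n and any α ∈ [0, 1/2]: consider the two graphs G1, G2 from the hardness gadget (agreeing on the first n/2 arrivals, with v_j adjacent to u_j and u_{j+n/2} for j ≤ n/2, and the second half adjacent to u_{j−n/2} in G1 versus u_j in G2). Any deterministic strategy for the first n/2 arrivals that allows at least (1−α)·n total matches when completed on G1 can achieve at most (1/2 + α)·n total matches when completed on G2. Hence no algorithm can be simultaneously (1−α)-consistent and strictly more than (1/2 + α)-robust. -/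
/-!
Split the offline vertices into the low half `L = {u < n/2}` and its complement. A matching's
size is the number of arrivals it sends into `L` plus the number it sends into `Lᶜ`. By
injectivity, `μ₁` sends at most `n/2` arrivals into `L` and `μ₂` at most `n/2` into `Lᶜ`. In `G1`
a second-half arrival can only go into `L`, and in `G2` only into `Lᶜ`; so the arrivals `μ₁` sends
into `Lᶜ` and those `μ₂` sends into `L` all lie in the first half, where the two matchings agree,
hence they form disjoint subsets of it. Altogether `|μ₁| + |μ₂| ≤ 3n/2`.
-/

open Finset

section matchedInto

variable {ι κ : Type*} [Fintype ι] [DecidableEq κ]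

def matchedInto (μ : ι → Option κ) (t : Finset κ) : Finset ι :=
  {j | ∃ u ∈ t, μ j = some u}

@[simp]
theorem mem_matchedInto {μ : ι → Option κ} {t : Finset κ} {j : ι} :
    j ∈ matchedInto μ t ↔ ∃ u ∈ t, μ j = some u := by
  simp [matchedInto]

theorem card_matchedInto_le {μ : ι → Option κ}
    (hμ : ∀ j j' u, μ j = some u → μ j' = some u → j = j') (t : Finset κ) :
    #(matchedInto μ t) ≤ #t :=
  card_le_card_of_forall_subsingleton (fun j u => μ j = some u) (by simp)
    fun u _ j hj j' hj' => hμ j j' u hj.2 hj'.2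

theorem card_isSome_eq_card_matchedInto_add_compl [DecidableEq ι] [Fintype κ] (μ : ι → Option κ)
    (t : Finset κ) :
    #{j | (μ j).isSome} = #(matchedInto μ t) + #(matchedInto μ tᶜ) := by
  rw [← card_union_of_disjoint]
  · congr 1
    ext j
    cases h : μ j <;> simp [h, em]
  · refine disjoint_left.2 fun j hj hj' => ?_
    obtain ⟨u, hu, hj⟩ := mem_matchedInto.1 hj
    obtain ⟨u', hu', hj'⟩ := mem_matchedInto.1 hj'
    rw [hj, Option.some_inj] at hj'
    exact mem_compl.1 hu' (hj' ▸ hu)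

end matchedInto

def lowHalf (n : ℕ) : Finset (Fin n) :=
  {u | (u : ℕ) < n / 2}

@[simp]
theorem mem_lowHalf {n : ℕ} {u : Fin n} : u ∈ lowHalf n ↔ (u : ℕ) < n / 2 := by
  simp [lowHalf]

theorem card_lowHalf (n : ℕ) : #(lowHalf n) = n / 2 := by
  rw [lowHalf, Fin.card_filter_val_lt]; omega

theorem card_lowHalf_compl {n : ℕ} (hn : Even n) : #(lowHalf n)ᶜ = n / 2 := by
  rw [card_compl, Fintype.card_fin, card_lowHalf]; obtain ⟨m, rfl⟩ := hn; omega

theorem lt_half_of_mem_gadgetN1 {n : ℕ} (hn : Even n) {j u : Fin n} (hj : n / 2 ≤ (j : ℕ))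
    (hu : u ∈ gadgetN1 n j) : (u : ℕ) < n / 2 := by
  simp only [gadgetN1, if_neg (not_lt.2 hj)] at hu
  change (u : ℕ) = j - n / 2 at hu
  obtain ⟨m, rfl⟩ := hn; omega

theorem eq_of_mem_gadgetN2 {n : ℕ} {j u : Fin n} (hj : n / 2 ≤ (j : ℕ))
    (hu : u ∈ gadgetN2 n j) : u = j := by
  simp only [gadgetN2, if_neg (not_lt.2 hj)] at hu
  exact hu

theorem matchSize_gadgetN1_add_matchSize_gadgetN2_le {n : ℕ} (hn : Even n)
    {μ₁ μ₂ : Fin n → Option (Fin n)} (h₁ : RespectsMatching n (gadgetN1 n) μ₁)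
    (h₂ : RespectsMatching n (gadgetN2 n) μ₂)
    (hagree : ∀ j : Fin n, (j : ℕ) < n / 2 → μ₂ j = μ₁ j) :
    matchSize n μ₁ + matchSize n μ₂ ≤ 3 * (n / 2) := by
  set L := lowHalf n
  have hhigh₁ : matchedInto μ₁ Lᶜ ⊆ L := by
    intro j hj
    obtain ⟨u, hu, hju⟩ := mem_matchedInto.1 hj
    by_contra hjL
    simp only [L, mem_compl, mem_lowHalf, not_lt] at hu hjL
    exact (lt_half_of_mem_gadgetN1 hn hjL (h₁.1 j u hju)).not_ge hu
  have hlow₂ : matchedInto μ₂ L ⊆ L := by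
    intro j hj
    obtain ⟨u, hu, hju⟩ := mem_matchedInto.1 hj
    by_contra hjL
    simp only [L, mem_lowHalf, not_lt] at hu hjL
    rw [eq_of_mem_gadgetN2 hjL (h₂.1 j u hju)] at hu
    exact hu.not_ge hjL
  have hdisj : Disjoint (matchedInto μ₁ Lᶜ) (matchedInto μ₂ L) := by
    refine disjoint_left.2 fun j hj₁ hj₂ => ?_
    obtain ⟨u, hu, hju⟩ := mem_matchedInto.1 hj₁
    obtain ⟨u', hu', hju'⟩ := mem_matchedInto.1 hj₂
    rw [hagree j (mem_lowHalf.1 (hhigh₁ hj₁)), hju, Option.some_inj] at hju'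
    exact mem_compl.1 hu (hju' ▸ hu')
  have hmiddle : #(matchedInto μ₁ Lᶜ) + #(matchedInto μ₂ L) ≤ n / 2 := by
    rw [← card_union_of_disjoint hdisj, ← card_lowHalf n]
    exact card_le_card (union_subset hhigh₁ hlow₂)
  have hlow₁ := card_matchedInto_le h₁.2 L
  have hhigh₂ := card_matchedInto_le h₂.2 Lᶜ
  rw [card_lowHalf] at hlow₁
  rw [card_lowHalf_compl hn] at hhigh₂
  rw [matchSize, matchSize, card_isSome_eq_card_matchedInto_add_compl μ₁ L,
    card_isSome_eq_card_matchedInto_add_compl μ₂ L]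
  omega

theorem hardness_gadget_tradeoff_general (n : ℕ) (hn : Even n)
    (α : ℝ)
    (μ₁ μ₂ : Fin n → Option (Fin n))
    (h₁ : RespectsMatching n (gadgetN1 n) μ₁)
    (hsize₁ : (1 - α) * n ≤ (matchSize n μ₁ : ℝ))
    (h₂ : RespectsMatching n (gadgetN2 n) μ₂)
    (hagree : ∀ j : Fin n, (j : ℕ) < n / 2 → μ₂ j = μ₁ j) :
    (matchSize n μ₂ : ℝ) ≤ (1 / 2 + α) * n := by
  have hsum := matchSize_gadgetN1_add_matchSize_gadgetN2_le hn h₁ h₂ hagree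
  obtain ⟨m, rfl⟩ := hn
  rw [show (m + m) / 2 = m by omega] at hsum
  have hsum' : (matchSize (m + m) μ₁ : ℝ) + matchSize (m + m) μ₂ ≤ 3 * m := by
    exact_mod_cast hsum
  push_cast at hsize₁ ⊢
  linarith

/-- Quantitative hardness: for any `α ∈ [0, 1/2]`, any matching of the gadget graph `G1`
of size at least `(1 - α) n` forces any matching of `G2` that agrees with it on the first
`n/2` online vertices to have size at most `(1/2 + α) n`.  Hence no algorithm can be
simultaneously `(1-α)`-consistent and strictly more than `(1/2 + α)`-robust. -/
theorem hardness_gadget_tradeoff (n : ℕ) (hn : Even n) (hpos : 0 < n)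
    (α : ℝ) (hα0 : 0 ≤ α) (hα1 : α ≤ 1 / 2)
    (μ₁ μ₂ : Fin n → Option (Fin n))
    (h₁ : RespectsMatching n (gadgetN1 n) μ₁)
    (hsize₁ : (1 - α) * n ≤ (matchSize n μ₁ : ℝ))
    (h₂ : RespectsMatching n (gadgetN2 n) μ₂)
    (hagree : ∀ j : Fin n, (j : ℕ) < n / 2 → μ₂ j = μ₁ j) :
    (matchSize n μ₂ : ℝ) ≤ (1 / 2 + α) * n :=
  hardness_gadget_tradeoff_general n hn α μ₁ μ₂ h₁ hsize₁ h₂ hagree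
end
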